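/- Let x(β) be the unique minimizer of f_β over the nonnegative orthant, and define the perturbed data b_β := A x(β) and c_β := c + (1/β)(x(β) − x̄). Then x(β) is an optimal solution of the perturbed linear program min c_β^T x subject to Ax = b_β, x ≥ 0, with corresponding dual optimal vector û := ū − β(A x(β) − b); that is, the pair (x(β), û) satisfies the KKT conditions: A x(β) = b_β, x(β) ≥ 0, c_β − A^T û ≥ 0, and x(β)^T (c_β − A^T û) = 0. -/

import Mathlib

open Matrix Finset MeasureTheory ProbabilityTheory

/-- Euclidean norm of a finitely-indexed real vector. -/
noncomputable def l2norm {ι : Type*} [Fintype ι] (x : ι → ℝ) : ℝ :=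
  Real.sqrt (∑ i, (x i) ^ 2)

/-- Frobenius norm of a real matrix. -/
noncomputable def frobNorm {ι κ : Type*} [Fintype ι] [Fintype κ] (A : Matrix ι κ ℝ) : ℝ :=
  Real.sqrt (∑ i, ∑ j, (A i j) ^ 2)

/-- Euclidean inner product. -/
noncomputable def rdot {ι : Type*} [Fintype ι] (a b : ι → ℝ) : ℝ := ∑ i, a i * b i

/-- The regularized quadratic penalty objective
`f_β(x) = cᵀx − ūᵀ(Ax−b) + (β/2)‖Ax−b‖² + (1/(2β))‖x−x̄‖²`. -/
noncomputable def fpen {ι κ : Type*} [Fintype ι] [Fintype κ]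
    (A : Matrix ι κ ℝ) (b : ι → ℝ) (c : κ → ℝ) (ub : ι → ℝ) (xb : κ → ℝ)
    (β : ℝ) (x : κ → ℝ) : ℝ :=
  rdot c x - rdot ub (A.mulVec x - b) + (β / 2) * l2norm (A.mulVec x - b) ^ 2
    + (1 / (2 * β)) * l2norm (x - xb) ^ 2

/-!
The gradient of `f_β` at `x` is `c_β − Aᵀû`, with `c_β` and `û` built from `x` as in the
statement, and `f_β` is quadratic: `f_β(x + t d) = f_β(x) + t ⟨∇f_β(x), d⟩ + t² q(d)`.
Minimality over the convex orthant therefore gives the variational inequality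
`⟨∇f_β(x(β)), y − x(β)⟩ ≥ 0` for all `y ≥ 0`, which is exactly dual feasibility and complementary
slackness for the perturbed LP; optimality then follows from weak duality.
-/

section Penalty

variable {ι κ : Type*} [Fintype ι] [Fintype κ]

lemma rdot_eq_dotProduct (a b : κ → ℝ) : rdot a b = a ⬝ᵥ b := rfl

lemma l2norm_sq (x : κ → ℝ) : l2norm x ^ 2 = x ⬝ᵥ x := by
  rw [l2norm, Real.sq_sqrt (Finset.sum_nonneg fun i _ => sq_nonneg _)]
  simp only [dotProduct, sq]

noncomputable def fpenGrad (A : Matrix ι κ ℝ) (b : ι → ℝ) (c : κ → ℝ) (ub : ι → ℝ)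
    (xb : κ → ℝ) (β : ℝ) (x : κ → ℝ) : κ → ℝ :=
  c + (1 / β) • (x - xb) - Aᵀ *ᵥ (ub - β • (A *ᵥ x - b))

lemma fpen_add_smul (A : Matrix ι κ ℝ) (b : ι → ℝ) (c : κ → ℝ) (ub : ι → ℝ) (xb : κ → ℝ)
    (β : ℝ) (x d : κ → ℝ) (t : ℝ) :
    fpen A b c ub xb β (x + t • d) = fpen A b c ub xb β x
      + t * (fpenGrad A b c ub xb β x ⬝ᵥ d)
      + t ^ 2 * ((β / 2) * (A *ᵥ d ⬝ᵥ A *ᵥ d) + (1 / (2 * β)) * (d ⬝ᵥ d)) := by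
  have hres : A *ᵥ (x + t • d) - b = (A *ᵥ x - b) + t • A *ᵥ d := by
    rw [mulVec_add, mulVec_smul]; abel
  have hdev : x + t • d - xb = (x - xb) + t • d := by abel
  simp only [fpen, fpenGrad, rdot_eq_dotProduct, l2norm_sq, hres, hdev, sub_dotProduct,
    dotProduct_sub, add_dotProduct, dotProduct_add, smul_dotProduct, dotProduct_smul,
    smul_eq_mul, mulVec_transpose, ← dotProduct_mulVec, dotProduct_comm d]
  rw [dotProduct_comm (A *ᵥ d) (A *ᵥ x), dotProduct_comm (A *ᵥ d) b]
  ring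

lemma nonneg_of_forall_mul_add_mul_sq_nonneg {a q : ℝ}
    (h : ∀ t : ℝ, 0 < t → t ≤ 1 → 0 ≤ t * a + t ^ 2 * q) : 0 ≤ a := by
  have hlim : Filter.Tendsto (fun t : ℝ => a + t * q) (nhdsWithin 0 (Set.Ioi 0)) (nhds a) :=
    (Continuous.tendsto' (by fun_prop) 0 a (by simp)).mono_left nhdsWithin_le_nhds
  refine ge_of_tendsto hlim ?_
  filter_upwards [Ioo_mem_nhdsGT zero_lt_one] with t ⟨ht0, ht1⟩
  have := h t ht0 ht1.le
  nlinarith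

lemma fpenGrad_dotProduct_sub_nonneg_of_isMinOn {A : Matrix ι κ ℝ} {b : ι → ℝ} {c : κ → ℝ}
    {ub : ι → ℝ} {xb : κ → ℝ} {β : ℝ} {s : Set (κ → ℝ)} {x y : κ → ℝ} (hs : Convex ℝ s)
    (hmin : IsMinOn (fpen A b c ub xb β) s x) (hx : x ∈ s) (hy : y ∈ s) :
    0 ≤ fpenGrad A b c ub xb β x ⬝ᵥ (y - x) := by
  refine nonneg_of_forall_mul_add_mul_sq_nonneg
    (q := (β / 2) * (A *ᵥ (y - x) ⬝ᵥ A *ᵥ (y - x)) + (1 / (2 * β)) * ((y - x) ⬝ᵥ (y - x)))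
    fun t ht0 ht1 => ?_
  have hle := isMinOn_iff.1 hmin _ (hs.add_smul_sub_mem hx hy ⟨ht0.le, ht1⟩)
  rw [fpen_add_smul] at hle
  linarith

end Penalty

section Orthant

variable {κ : Type*} [Fintype κ]

lemma nonneg_of_forall_dotProduct_sub_nonneg [DecidableEq κ] {g x : κ → ℝ}
    (h : ∀ y, 0 ≤ y → 0 ≤ g ⬝ᵥ (y - x)) (hx : 0 ≤ x) : 0 ≤ g := fun j => by
  have := h (x + Pi.single j 1) (add_nonneg hx (Pi.single_nonneg.2 zero_le_one))
  rwa [add_sub_cancel_left, dotProduct_single, mul_one] at this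

lemma dotProduct_eq_zero_of_forall_dotProduct_sub_nonneg {g x : κ → ℝ}
    (h : ∀ y, 0 ≤ y → 0 ≤ g ⬝ᵥ (y - x)) (hx : 0 ≤ x) : g ⬝ᵥ x = 0 := by
  have hzero := h 0 le_rfl
  have hdouble := h (x + x) (add_nonneg hx hx)
  rw [zero_sub, dotProduct_neg] at hzero
  rw [add_sub_cancel_right] at hdouble
  linarith

end Orthant

lemma dotProduct_le_of_kkt {ι κ : Type*} [Fintype ι] [Fintype κ] {A : Matrix ι κ ℝ}
    {c x x' : κ → ℝ} {u : ι → ℝ} (hreduced : 0 ≤ c - Aᵀ *ᵥ u) (hslack : (c - Aᵀ *ᵥ u) ⬝ᵥ x = 0)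
    (hx' : 0 ≤ x') (hA : A *ᵥ x' = A *ᵥ x) : c ⬝ᵥ x ≤ c ⬝ᵥ x' := by
  have hsplit : ∀ z, c ⬝ᵥ z = (c - Aᵀ *ᵥ u) ⬝ᵥ z + u ⬝ᵥ A *ᵥ z := fun z => by
    rw [sub_dotProduct, mulVec_transpose, dotProduct_mulVec]; ring
  rw [hsplit x, hsplit x', hslack, hA]
  linarith [dotProduct_nonneg_of_nonneg hreduced hx']

theorem qp_penalty_solves_perturbed_lp_general
    {m n : ℕ} (A : Matrix (Fin m) (Fin n) ℝ) (b : Fin m → ℝ) (c : Fin n → ℝ)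
    (ub : Fin m → ℝ) (xb : Fin n → ℝ) (β : ℝ)
    -- x(β) : the minimizer of f_β over the nonnegative orthant
    (xβ : Fin n → ℝ) (hβnn : ∀ j, 0 ≤ xβ j)
    (hβmin : ∀ x : Fin n → ℝ, (∀ j, 0 ≤ x j) →
      fpen A b c ub xb β xβ ≤ fpen A b c ub xb β x)
    -- the perturbed data and the candidate dual vector
    (bβ : Fin m → ℝ) (hbβ : bβ = A.mulVec xβ)
    (cβ : Fin n → ℝ) (hcβ : cβ = c + (1 / β) • (xβ - xb))
    (uh : Fin m → ℝ) (huh : uh = ub - β • (A.mulVec xβ - b)) :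
    -- KKT conditions for the perturbed primal–dual pair
    A.mulVec xβ = bβ ∧
    (∀ j, 0 ≤ xβ j) ∧
    (∀ j, 0 ≤ (cβ - Aᵀ.mulVec uh) j) ∧
    rdot xβ (cβ - Aᵀ.mulVec uh) = 0 ∧
    -- hence x(β) is optimal for the perturbed LP
    (∀ x : Fin n → ℝ, (∀ j, 0 ≤ x j) → A.mulVec x = bβ → rdot cβ xβ ≤ rdot cβ x) := by
  subst hbβ hcβ huh
  have hvar : ∀ y, 0 ≤ y → 0 ≤ fpenGrad A b c ub xb β xβ ⬝ᵥ (y - xβ) := fun y hy =>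
    fpenGrad_dotProduct_sub_nonneg_of_isMinOn (convex_Ici 0) hβmin hβnn hy
  have hreduced := nonneg_of_forall_dotProduct_sub_nonneg hvar hβnn
  have hslack := dotProduct_eq_zero_of_forall_dotProduct_sub_nonneg hvar hβnn
  exact ⟨rfl, hβnn, hreduced, (dotProduct_comm _ _).trans hslack,
    fun x hx hAx => dotProduct_le_of_kkt hreduced hslack hx hAx⟩

/-- the penalty minimizer `x(β)` solves the perturbed LP
`min c_βᵀx s.t. Ax = b_β, x ≥ 0` with dual vector `û = ū − β(Ax(β) − b)`;
i.e. the pair satisfies the KKT conditions. -/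
theorem qp_penalty_solves_perturbed_lp
    {m n : ℕ} (A : Matrix (Fin m) (Fin n) ℝ) (b : Fin m → ℝ) (c : Fin n → ℝ)
    (ub : Fin m → ℝ) (xb : Fin n → ℝ) (β : ℝ) (hβ : 0 < β)
    -- x(β) : the minimizer of f_β over the nonnegative orthant
    (xβ : Fin n → ℝ) (hβnn : ∀ j, 0 ≤ xβ j)
    (hβmin : ∀ x : Fin n → ℝ, (∀ j, 0 ≤ x j) →
      fpen A b c ub xb β xβ ≤ fpen A b c ub xb β x)
    -- the perturbed data and the candidate dual vector
    (bβ : Fin m → ℝ) (hbβ : bβ = A.mulVec xβ)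
    (cβ : Fin n → ℝ) (hcβ : cβ = c + (1 / β) • (xβ - xb))
    (uh : Fin m → ℝ) (huh : uh = ub - β • (A.mulVec xβ - b)) :
    -- KKT conditions for the perturbed primal–dual pair
    A.mulVec xβ = bβ ∧
    (∀ j, 0 ≤ xβ j) ∧
    (∀ j, 0 ≤ (cβ - Aᵀ.mulVec uh) j) ∧
    rdot xβ (cβ - Aᵀ.mulVec uh) = 0 ∧
    -- hence x(β) is optimal for the perturbed LP
    (∀ x : Fin n → ℝ, (∀ j, 0 ≤ x j) → A.mulVec x = bβ → rdot cβ xβ ≤ rdot cβ x) :=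
  qp_penalty_solves_perturbed_lp_general A b c ub xb β xβ hβnn hβmin bβ hbβ cβ hcβ uh huh
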